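/- Let v_1,…,v_d and w_1,…,w_d be bases of two Lagrangian planes Π and Γ in (ℝ^{2d}, Ω) with Π ∩ Γ = {0}, and suppose det B_v ≠ 0 and det B_w ≠ 0. Then for every Schwartz function g on ℝ^d, every j = 1,…,d, and all ξ, η ∈ ℝ^d: 𝓕̃_v(Q_{v_j}(g))(ξ) = ξ_j 𝓕̃_v(g)(ξ) and 𝓕̃_w(Q_{w_j}(g))(η) = η_j 𝓕̃_w(g)(η); i.e., Q_{v_j} is multiplication by the j-th coordinate in the 𝓕̃_v representation and Q_{w_j} is multiplication by the j-th coordinate in the 𝓕̃_w representation. -/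

import Mathlib

/-!
STATEMENT 16 (the operators Q_{v_j} and Q_{w_j} become multiplication by coordinates in
the modified generalized Fourier transform representations).
Here ℝ^{2d} is identified with ℝ^d × ℝ^d.
-/

open MeasureTheory Complex Matrix

noncomputable section

namespace BLT16

/-- Euclidean dot product on `ℝ^d`. -/
def dotR {d : ℕ} (x y : Fin d → ℝ) : ℝ := ∑ k, x k * y k

/-- The standard symplectic form on `ℝ^{2d} = ℝ^d × ℝ^d`:
`Ω((x,y),(ξ,η)) = x·η - y·ξ`. -/
def Omega {d : ℕ} (u v : (Fin d → ℝ) × (Fin d → ℝ)) : ℝ :=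
  dotR u.1 v.2 - dotR u.2 v.1

/-- The matrix `A_v(j,k) = v_j^k` (first `d` coordinates). -/
def Amat {d : ℕ} (v : Fin d → (Fin d → ℝ) × (Fin d → ℝ)) : Matrix (Fin d) (Fin d) ℝ :=
  Matrix.of fun j k => (v j).1 k

/-- The matrix `B_v(j,k) = v_j^{k+d}` (last `d` coordinates). -/
def Bmat {d : ℕ} (v : Fin d → (Fin d → ℝ) × (Fin d → ℝ)) : Matrix (Fin d) (Fin d) ℝ :=
  Matrix.of fun j k => (v j).2 k

/-- The matrix `Y_{v,w}(i,j) = Ω(v_i, w_j)`. -/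
def Ymat {d : ℕ} (v w : Fin d → (Fin d → ℝ) × (Fin d → ℝ)) : Matrix (Fin d) (Fin d) ℝ :=
  Matrix.of fun i j => Omega (v i) (w j)

/-- The generalized Fourier transform
`𝓕_v(h)(ξ) = |det B_v|^{-1/2} ∫ h(x) e^{2πi xᵗB_v⁻¹ξ - πi xᵗB_v⁻¹A_v x} dx`. -/
def genFT {d : ℕ} (Av Bv : Matrix (Fin d) (Fin d) ℝ) (h : (Fin d → ℝ) → ℂ)
    (ξ : Fin d → ℝ) : ℂ :=
  ((1 / Real.sqrt |Bv.det| : ℝ) : ℂ) *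
    ∫ x, h x * Complex.exp
      (2 * (Real.pi : ℂ) * Complex.I * (dotR x ((Bv⁻¹).mulVec ξ) : ℝ) -
        (Real.pi : ℂ) * Complex.I * (dotR x ((Bv⁻¹ * Av).mulVec x) : ℝ))

/-- The modified transform `𝓕̃_v(g)(ξ) = e^{-πi ξᵗ(B_v⁻¹)ᵗB_wᵗY_{v,w}⁻¹ξ} 𝓕_v(g)(ξ)`. -/
def FtildeV {d : ℕ} (Av Bv Bw Y : Matrix (Fin d) (Fin d) ℝ) (g : (Fin d → ℝ) → ℂ)
    (ξ : Fin d → ℝ) : ℂ :=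
  Complex.exp (-((Real.pi : ℂ) * Complex.I *
      (dotR ξ (((Bv⁻¹)ᵀ * Bwᵀ * Y⁻¹).mulVec ξ) : ℝ))) * genFT Av Bv g ξ

/-- The modified transform
`𝓕̃_w(g)(η) = e^{-πiσ/4} e^{-πi ηᵗY_{v,w}⁻¹B_vB_w⁻¹η} 𝓕_w(g)(η)`. -/
def FtildeW {d : ℕ} (Aw Bv Bw Y : Matrix (Fin d) (Fin d) ℝ) (σ : ℤ)
    (g : (Fin d → ℝ) → ℂ) (η : Fin d → ℝ) : ℂ :=
  Complex.exp (-((Real.pi : ℂ) * Complex.I * (σ : ℂ) / 4)) *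
    Complex.exp (-((Real.pi : ℂ) * Complex.I *
      (dotR η ((Y⁻¹ * Bv * Bw⁻¹).mulVec η) : ℝ))) * genFT Aw Bw g η

/-- `σ` is the signature of the quadratic form given by the symmetric matrix `C`:
the number of positive squares minus the number of negative squares in a
diagonalization (well defined by Sylvester's law of inertia). -/
def IsSignatureOf {d : ℕ} (C : Matrix (Fin d) (Fin d) ℝ) (σ : ℤ) : Prop :=
  ∃ P : Matrix (Fin d) (Fin d) ℝ, IsUnit P.det ∧ (Pᵀ * C * P).IsDiag ∧
    σ = ((Finset.univ.filter fun i => 0 < (Pᵀ * C * P) i i).card : ℤ) -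
        ((Finset.univ.filter fun i => (Pᵀ * C * P) i i < 0).card : ℤ)

/-- The operator `Q_v` associated with `v = (v.1, v.2) ∈ ℝ^{2d}`:
`Q_v(h)(x) = (i/2π) Σ_k v^{k+d} ∂h/∂x^k(x) + (Σ_k v^k x^k) h(x)`. -/
def Qop {d : ℕ} (v : (Fin d → ℝ) × (Fin d → ℝ)) (h : (Fin d → ℝ) → ℂ) :
    (Fin d → ℝ) → ℂ :=
  fun x => (Complex.I / (2 * (Real.pi : ℂ))) * fderiv ℝ h x v.2 + (dotR v.1 x : ℂ) * h x

/-! ### Auxiliary lemmas -/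

variable {d : ℕ}

lemma dotR_eq (x y : Fin d → ℝ) : dotR x y = x ⬝ᵥ y := rfl

lemma dotR_add_left (x y z : Fin d → ℝ) : dotR (x + y) z = dotR x z + dotR y z := by
  simp [dotR_eq, add_dotProduct]

lemma dotR_smul_left (t : ℝ) (x z : Fin d → ℝ) : dotR (t • x) z = t * dotR x z := by
  simp [dotR_eq, smul_dotProduct]

lemma dotR_add_right (x y z : Fin d → ℝ) : dotR z (x + y) = dotR z x + dotR z y := by
  simp [dotR_eq, dotProduct_add]

lemma dotR_smul_right (t : ℝ) (x z : Fin d → ℝ) : dotR z (t • x) = t * dotR z x := by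
  simp [dotR_eq, dotProduct_smul]

lemma dotR_comm (x y : Fin d → ℝ) : dotR x y = dotR y x := by
  simp [dotR_eq, dotProduct_comm]

lemma dotR_mulVec_symm {M : Matrix (Fin d) (Fin d) ℝ} (hM : Mᵀ = M) (x u : Fin d → ℝ) :
    dotR x (M.mulVec u) = dotR u (M.mulVec x) := by
  rw [dotR_eq, dotProduct_mulVec, ← mulVec_transpose, hM, dotR_eq, dotProduct_comm]

lemma dotR_row_mulVec (M : Matrix (Fin d) (Fin d) ℝ) (j : Fin d) (w : Fin d → ℝ) :
    dotR (fun k => M j k) w = M.mulVec w j := rfl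

lemma abs_dotR_le (y z : Fin d → ℝ) : |dotR y z| ≤ (∑ k, |y k|) * ‖z‖ := by
  calc |dotR y z| ≤ ∑ k, |y k * z k| := Finset.abs_sum_le_sum_abs _ _
    _ ≤ ∑ k, |y k| * ‖z‖ := by
        refine Finset.sum_le_sum fun k _ => ?_
        rw [abs_mul]
        exact mul_le_mul_of_nonneg_left ((Real.norm_eq_abs _ ▸ norm_le_pi_norm z k)) (abs_nonneg _)
    _ = (∑ k, |y k|) * ‖z‖ := by rw [Finset.sum_mul]

lemma norm_mulVec_le (M : Matrix (Fin d) (Fin d) ℝ) (x : Fin d → ℝ) :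
    ‖M.mulVec x‖ ≤ (∑ k, ∑ l, |M k l|) * ‖x‖ := by
  have h0 : (0:ℝ) ≤ (∑ k, ∑ l, |M k l|) * ‖x‖ := by positivity
  rw [pi_norm_le_iff_of_nonneg h0]
  intro i
  calc ‖M.mulVec x i‖ = |dotR (fun k => M i k) x| := by rw [dotR_row_mulVec]; rfl
    _ ≤ (∑ l, |M i l|) * ‖x‖ := abs_dotR_le _ _
    _ ≤ (∑ k, ∑ l, |M k l|) * ‖x‖ := by
        refine mul_le_mul_of_nonneg_right ?_ (norm_nonneg _)
        exact Finset.single_le_sum (f := fun k => ∑ l, |M k l|)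
          (fun k _ => by positivity) (Finset.mem_univ i)

lemma continuous_dotR_right (m : Fin d → ℝ) : Continuous fun y : Fin d → ℝ => dotR y m := by
  unfold dotR
  exact continuous_finset_sum _ fun k _ => (continuous_apply k).mul continuous_const

lemma continuous_dotR_left (m : Fin d → ℝ) : Continuous fun y : Fin d → ℝ => dotR m y := by
  simp only [fun y => dotR_comm m y]
  exact continuous_dotR_right m

lemma continuous_dotR_mulVec (M : Matrix (Fin d) (Fin d) ℝ) :
    Continuous fun y : Fin d → ℝ => dotR y (M.mulVec y) := by
  have : ∀ y : Fin d → ℝ, dotR y (M.mulVec y) = ∑ k, ∑ l, y k * (M k l * y l) := by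
    intro y
    simp [dotR, Matrix.mulVec, dotProduct, Finset.mul_sum]
  simp only [this]
  exact continuous_finset_sum _ fun k _ => continuous_finset_sum _ fun l _ =>
    (continuous_apply k).mul (continuous_const.mul (continuous_apply l))

/-- The phase function appearing in `genFT`. -/
def phase (m : Fin d → ℝ) (M : Matrix (Fin d) (Fin d) ℝ) (y : Fin d → ℝ) : ℂ :=
  Complex.exp (2 * (Real.pi : ℂ) * Complex.I * (dotR y m : ℝ) -
    (Real.pi : ℂ) * Complex.I * (dotR y (M.mulVec y) : ℝ))

lemma norm_phase (m : Fin d → ℝ) (M : Matrix (Fin d) (Fin d) ℝ) (y : Fin d → ℝ) :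
    ‖phase m M y‖ = 1 := by
  have : 2 * (Real.pi : ℂ) * Complex.I * (dotR y m : ℝ) -
      (Real.pi : ℂ) * Complex.I * (dotR y (M.mulVec y) : ℝ) =
      ((2 * Real.pi * dotR y m - Real.pi * dotR y (M.mulVec y) : ℝ) : ℂ) * Complex.I := by
    push_cast; ring
  rw [phase, this, Complex.norm_exp]
  simp

lemma continuous_phase (m : Fin d → ℝ) (M : Matrix (Fin d) (Fin d) ℝ) :
    Continuous (phase m M) := by
  unfold phase
  refine Complex.continuous_exp.comp (Continuous.sub ?_ ?_)
  · exact continuous_const.mul (Complex.continuous_ofReal.comp (continuous_dotR_right m))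
  · exact continuous_const.mul (Complex.continuous_ofReal.comp (continuous_dotR_mulVec M))

/-- Coefficient of the line derivative of the phase. -/
def phaseCoeff (m : Fin d → ℝ) (M : Matrix (Fin d) (Fin d) ℝ) (x u : Fin d → ℝ) : ℂ :=
  2 * (Real.pi : ℂ) * Complex.I * (dotR u m : ℝ) -
    (Real.pi : ℂ) * Complex.I * ((dotR u (M.mulVec x) : ℝ) + (dotR x (M.mulVec u) : ℝ))

lemma hasLineDerivAt_phase (m : Fin d → ℝ) (M : Matrix (Fin d) (Fin d) ℝ) (x u : Fin d → ℝ) :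
    HasLineDerivAt ℝ (phase m M) (phaseCoeff m M x u * phase m M x) x u := by
  have key : (fun t : ℝ => phase m M (x + t • u)) = fun t : ℝ =>
      Complex.exp ((2 * (Real.pi : ℂ) * Complex.I * (dotR x m : ℝ) -
          (Real.pi : ℂ) * Complex.I * (dotR x (M.mulVec x) : ℝ)) +
        phaseCoeff m M x u * (t : ℂ) +
        (-(Real.pi : ℂ) * Complex.I * (dotR u (M.mulVec u) : ℝ)) * (t : ℂ) ^ 2) := by
    funext t
    rw [phase]
    congr 1
    have h1 : dotR (x + t • u) m = dotR x m + t * dotR u m := by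
      rw [dotR_add_left, dotR_smul_left]
    have h2 : dotR (x + t • u) (M.mulVec (x + t • u)) =
        dotR x (M.mulVec x) + t * (dotR u (M.mulVec x) + dotR x (M.mulVec u))
          + t ^ 2 * dotR u (M.mulVec u) := by
      rw [Matrix.mulVec_add, Matrix.mulVec_smul, dotR_add_left, dotR_add_right, dotR_add_right,
        dotR_smul_left, dotR_smul_left, dotR_smul_right, dotR_smul_right]
      ring
    rw [h1, h2, phaseCoeff]
    push_cast
    ring
  rw [HasLineDerivAt, key]
  have h0 : HasDerivAt (fun t : ℝ => (t : ℂ)) 1 0 := by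
    exact Complex.ofRealCLM.hasDerivAt (x := (0:ℝ))
  set a : ℂ := 2 * (Real.pi : ℂ) * Complex.I * (dotR x m : ℝ) -
      (Real.pi : ℂ) * Complex.I * (dotR x (M.mulVec x) : ℝ)
  set b : ℂ := phaseCoeff m M x u
  set c : ℂ := -(Real.pi : ℂ) * Complex.I * (dotR u (M.mulVec u) : ℝ)
  have hb : HasDerivAt (fun t : ℝ => b * (t : ℂ)) b 0 := by simpa using h0.const_mul b
  have hsq : HasDerivAt (fun t : ℝ => (t : ℂ) ^ 2) 0 0 := by
    have := h0.mul h0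
    simp only [pow_two]
    simpa [Pi.mul_def] using this
  have hc : HasDerivAt (fun t : ℝ => c * (t : ℂ) ^ 2) 0 0 := by simpa using hsq.const_mul c
  have h1 : HasDerivAt (fun t : ℝ => a + b * (t : ℂ) + c * (t : ℂ) ^ 2) b 0 := by
    simpa [Pi.add_def] using (hb.const_add a).add hc
  have h2 := h1.cexp
  convert h2 using 1
  · rfl
  rw [phase]
  push_cast
  ring_nf
  congr 2
  simp only [a]
  ring

lemma norm_phaseCoeff_le (m : Fin d → ℝ) (M : Matrix (Fin d) (Fin d) ℝ) (u x : Fin d → ℝ) :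
    ‖phaseCoeff m M x u‖ ≤ 2 * Real.pi * |dotR u m| +
      Real.pi * (((∑ k, |u k|) * (∑ k, ∑ l, |M k l|) + ∑ k, |M.mulVec u k|)) * ‖x‖ := by
  have hπ : (0:ℝ) < Real.pi := Real.pi_pos
  have e1 : ‖2 * (Real.pi : ℂ) * Complex.I * ((dotR u m : ℝ) : ℂ)‖ = 2 * Real.pi * |dotR u m| := by
    simp [norm_mul, abs_of_pos hπ]
  have e2 : ‖(Real.pi : ℂ) * Complex.I *
      (((dotR u (M.mulVec x) : ℝ) + (dotR x (M.mulVec u) : ℝ) : ℂ))‖ =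
      Real.pi * |dotR u (M.mulVec x) + dotR x (M.mulVec u)| := by
    rw [show (((dotR u (M.mulVec x) : ℝ) : ℂ) + ((dotR x (M.mulVec u) : ℝ) : ℂ)) =
      (((dotR u (M.mulVec x) + dotR x (M.mulVec u) : ℝ)) : ℂ) by push_cast; ring]
    rw [norm_mul, norm_mul]
    simp only [Complex.norm_I, mul_one, Complex.norm_real, Real.norm_eq_abs,
      Complex.norm_real]
    rw [abs_of_pos hπ]
  calc ‖phaseCoeff m M x u‖ ≤ ‖2 * (Real.pi : ℂ) * Complex.I * ((dotR u m : ℝ) : ℂ)‖ +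
        ‖(Real.pi : ℂ) * Complex.I *
          (((dotR u (M.mulVec x) : ℝ) + (dotR x (M.mulVec u) : ℝ) : ℂ))‖ := by
        rw [phaseCoeff]; push_cast; exact norm_sub_le _ _
    _ = 2 * Real.pi * |dotR u m| +
        Real.pi * |dotR u (M.mulVec x) + dotR x (M.mulVec u)| := by rw [e1, e2]
    _ ≤ 2 * Real.pi * |dotR u m| +
        Real.pi * (((∑ k, |u k|) * (∑ k, ∑ l, |M k l|) + ∑ k, |M.mulVec u k|)) * ‖x‖ := by
        rw [add_le_add_iff_left, mul_assoc]
        refine mul_le_mul_of_nonneg_left ?_ hπ.le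
        calc |dotR u (M.mulVec x) + dotR x (M.mulVec u)|
            ≤ |dotR u (M.mulVec x)| + |dotR x (M.mulVec u)| := abs_add_le _ _
          _ ≤ (∑ k, |u k|) * ((∑ k, ∑ l, |M k l|) * ‖x‖) + (∑ k, |M.mulVec u k|) * ‖x‖ := by
              refine add_le_add ?_ ?_
              · exact (abs_dotR_le u _).trans
                  (mul_le_mul_of_nonneg_left (norm_mulVec_le M x)
                    (Finset.sum_nonneg fun k _ => abs_nonneg _))
              · rw [dotR_comm]; exact abs_dotR_le _ _
          _ = ((∑ k, |u k|) * (∑ k, ∑ l, |M k l|) + ∑ k, |M.mulVec u k|) * ‖x‖ := by ring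

lemma continuous_dotR_mulVec_right (u : Fin d → ℝ) (M : Matrix (Fin d) (Fin d) ℝ) :
    Continuous fun x : Fin d → ℝ => dotR u (M.mulVec x) := by
  have : ∀ x : Fin d → ℝ, dotR u (M.mulVec x) = ∑ k, ∑ l, u k * (M k l * x l) := fun x => by
    simp [dotR, Matrix.mulVec, dotProduct, Finset.mul_sum]
  simp only [this]
  exact continuous_finset_sum _ fun k _ => continuous_finset_sum _ fun l _ =>
    continuous_const.mul (continuous_const.mul (continuous_apply l))

lemma continuous_phaseCoeff (m : Fin d → ℝ) (M : Matrix (Fin d) (Fin d) ℝ) (u : Fin d → ℝ) :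
    Continuous fun x => phaseCoeff m M x u := by
  unfold phaseCoeff
  refine Continuous.sub continuous_const (continuous_const.mul ?_)
  exact (Complex.continuous_ofReal.comp (continuous_dotR_mulVec_right u M)).add
    (Complex.continuous_ofReal.comp (continuous_dotR_right (M.mulVec u)))

lemma pointwise_alg (z w E G : ℂ) (hπ : (Real.pi:ℂ) ≠ 0) :
    (Complex.I / (2*(Real.pi:ℂ))) * -((2*(Real.pi:ℂ)*Complex.I*(z - w)) * E * G) + w * (G * E)
      = z * (G * E) := by
  field_simp
  linear_combination (-(E * G * (z - w))) * Complex.I_sq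

/-- Integrability criterion: dominated by an affine weight times a Schwartz function. -/
lemma integrable_affine_schwartz (g : SchwartzMap (Fin d → ℝ) ℂ) {F : (Fin d → ℝ) → ℂ}
    (hF : AEStronglyMeasurable F volume) (a b : ℝ)
    (h : ∀ x, ‖F x‖ ≤ (a + b * ‖x‖) * ‖g x‖) : Integrable F volume := by
  have h2 := (g.integrable_pow_mul volume 1).const_mul b
  simp only [pow_one] at h2
  have h1 : Integrable (fun x : Fin d → ℝ => a * ‖g x‖ + b * (‖x‖ * ‖g x‖)) volume :=
    ((g.integrable (μ := volume)).norm.const_mul a).add h2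
  refine h1.mono' hF (ae_of_all _ fun x => ?_)
  calc ‖F x‖ ≤ (a + b * ‖x‖) * ‖g x‖ := h x
    _ = a * ‖g x‖ + b * (‖x‖ * ‖g x‖) := by ring

/-! ### Core analytic lemma -/

lemma integrable_dotR_mul (g : SchwartzMap (Fin d → ℝ) ℂ) (E : (Fin d → ℝ) → ℂ)
    (hE : AEStronglyMeasurable E volume) (hEn : ∀ x, ‖E x‖ = 1) (av : Fin d → ℝ) :
    Integrable (fun x => ((dotR av x : ℝ) : ℂ) * (g x * E x)) volume := by
  refine integrable_affine_schwartz g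
    (((Complex.continuous_ofReal.comp (continuous_dotR_left av)).aestronglyMeasurable).mul
      (g.continuous.aestronglyMeasurable.mul hE)) 0 (∑ k, |av k|) fun x => ?_
  rw [norm_mul, norm_mul, hEn, mul_one, Complex.norm_real, Real.norm_eq_abs, zero_add]
  refine mul_le_mul_of_nonneg_right ?_ (norm_nonneg _)
  exact abs_dotR_le av x

lemma integral_Qop_phase (A B : Matrix (Fin d) (Fin d) ℝ) (hB : IsUnit B.det)
    (hsym : (B⁻¹ * A)ᵀ = B⁻¹ * A) (g : SchwartzMap (Fin d → ℝ) ℂ) (j : Fin d) (ξ : Fin d → ℝ) :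
    ∫ x, Qop (fun k => A j k, fun k => B j k) (⇑g) x * phase (B⁻¹.mulVec ξ) (B⁻¹ * A) x =
      ((ξ j : ℝ) : ℂ) * ∫ x, g x * phase (B⁻¹.mulVec ξ) (B⁻¹ * A) x := by
  set m : Fin d → ℝ := B⁻¹.mulVec ξ with hm
  set M : Matrix (Fin d) (Fin d) ℝ := B⁻¹ * A with hM
  set u : Fin d → ℝ := fun k => B j k with hu
  set av : Fin d → ℝ := fun k => A j k with hav
  set E : (Fin d → ℝ) → ℂ := phase m M with hE
  set g1 : SchwartzMap (Fin d → ℝ) ℂ := LineDeriv.lineDerivOpCLM ℝ (SchwartzMap (Fin d → ℝ) ℂ) u g with hg1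
  have hg1x : ∀ x, g1 x = fderiv ℝ (⇑g) x u := fun x => rfl
  -- key scalar identities
  have F1 : dotR u m = ξ j := by
    rw [hu, dotR_row_mulVec, hm, Matrix.mulVec_mulVec, Matrix.mul_nonsing_inv _ hB,
      Matrix.one_mulVec]
  have F2 : ∀ x, dotR u (M.mulVec x) = dotR av x := by
    intro x
    rw [hu, dotR_row_mulVec, Matrix.mulVec_mulVec, hM, ← Matrix.mul_assoc,
      Matrix.mul_nonsing_inv _ hB, Matrix.one_mul, hav, dotR_row_mulVec]
  have F3 : ∀ x, phaseCoeff m M x u =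
      2 * (Real.pi : ℂ) * Complex.I * (((ξ j : ℝ) : ℂ) - ((dotR av x : ℝ) : ℂ)) := by
    intro x
    rw [phaseCoeff, F1, F2 x, dotR_mulVec_symm hsym x u, F2 x]
    push_cast
    ring
  -- integrability
  have hEmeas := (continuous_phase m M).aestronglyMeasurable (μ := volume)
  have hEn : ∀ x, ‖E x‖ = 1 := fun x => norm_phase m M x
  have h3 : Integrable (fun x => E x * g x) volume := by
    refine integrable_affine_schwartz g (hEmeas.mul g.continuous.aestronglyMeasurable) 1 0
      fun x => ?_
    rw [norm_mul, hEn]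
    simp
  have h2 : Integrable (fun x => E x * g1 x) volume := by
    refine integrable_affine_schwartz g1 (hEmeas.mul g1.continuous.aestronglyMeasurable) 1 0
      fun x => ?_
    rw [norm_mul, hEn]
    simp
  have h1 : Integrable (fun x => (phaseCoeff m M x u * E x) * g x) volume := by
    refine integrable_affine_schwartz g
      ((((continuous_phaseCoeff m M u).aestronglyMeasurable).mul hEmeas).mul
        g.continuous.aestronglyMeasurable)
      (2 * Real.pi * |dotR u m|)
      (Real.pi * (((∑ k, |u k|) * (∑ k, ∑ l, |M k l|) + ∑ k, |M.mulVec u k|)))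
      fun x => ?_
    rw [norm_mul, norm_mul, hEn, mul_one]
    exact mul_le_mul_of_nonneg_right (norm_phaseCoeff_le m M u x) (norm_nonneg _)
  have h4 : Integrable (fun x => ((dotR av x : ℝ) : ℂ) * (g x * E x)) volume :=
    integrable_dotR_mul g E hEmeas hEn av
  -- integration by parts
  have ibp : (∫ x, E x * g1 x) = - ∫ x, (phaseCoeff m M x u * E x) * g x := by
    have key := integral_bilinear_hasLineDerivAt_right_eq_neg_left_of_integrable
      (μ := volume) (B := ContinuousLinearMap.mul ℝ ℂ)
      (f := E) (f' := fun x => phaseCoeff m M x u * E x)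
      (g := ⇑g) (g' := fun x => fderiv ℝ (⇑g) x u) (v := u)
      (by simpa using h1) (by simpa [hg1x] using h2) (by simpa using h3)
      (fun x _ => hasLineDerivAt_phase m M x u)
      (fun x _ => ((g.differentiable x).hasFDerivAt.hasLineDerivAt u))
    simpa [hg1x] using key
  -- splitting the integrand
  have split : ∀ x, Qop (av, u) (⇑g) x * E x =
      (Complex.I / (2 * (Real.pi : ℂ))) * (E x * g1 x) +
        ((dotR av x : ℝ) : ℂ) * (g x * E x) := by
    intro x
    simp only [Qop, hg1x]
    ring
  have hπ : (Real.pi : ℂ) ≠ 0 := Complex.ofReal_ne_zero.2 Real.pi_ne_zero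
  calc (∫ x, Qop (av, u) (⇑g) x * E x)
      = ∫ x, ((Complex.I / (2 * (Real.pi : ℂ))) * (E x * g1 x) +
          ((dotR av x : ℝ) : ℂ) * (g x * E x)) := by simp_rw [split]
    _ = (Complex.I / (2 * (Real.pi : ℂ))) * (∫ x, E x * g1 x) +
          ∫ x, ((dotR av x : ℝ) : ℂ) * (g x * E x) := by
        rw [integral_add (h2.const_mul _) h4, integral_const_mul]
    _ = (∫ x, (Complex.I / (2 * (Real.pi : ℂ))) *
            -((phaseCoeff m M x u * E x) * g x)) +
          ∫ x, ((dotR av x : ℝ) : ℂ) * (g x * E x) := by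
        rw [ibp]
        congr 1
        rw [← integral_neg, ← integral_const_mul]
    _ = ∫ x, ((Complex.I / (2 * (Real.pi : ℂ))) * -((phaseCoeff m M x u * E x) * g x) +
          ((dotR av x : ℝ) : ℂ) * (g x * E x)) := by
        rw [← integral_add ?_ h4]
        have := (h1.neg).const_mul (Complex.I / (2 * (Real.pi : ℂ)))
        simpa [mul_neg] using this
    _ = ∫ x, ((ξ j : ℝ) : ℂ) * (g x * E x) := by
        congr 1
        funext x
        rw [F3 x]
        exact pointwise_alg _ _ (E x) (g x) hπ
    _ = ((ξ j : ℝ) : ℂ) * ∫ x, g x * E x := by rw [integral_const_mul]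

lemma genFT_Qop (A B : Matrix (Fin d) (Fin d) ℝ) (hB : IsUnit B.det)
    (hsym : (B⁻¹ * A)ᵀ = B⁻¹ * A) (g : SchwartzMap (Fin d → ℝ) ℂ) (j : Fin d) (ξ : Fin d → ℝ) :
    genFT A B (Qop (fun k => A j k, fun k => B j k) (⇑g)) ξ =
      ((ξ j : ℝ) : ℂ) * genFT A B (⇑g) ξ := by
  have key := integral_Qop_phase A B hB hsym g j ξ
  simp only [phase] at key
  simp only [genFT]
  rw [key]
  ring

lemma lagrangian_symm (v : Fin d → (Fin d → ℝ) × (Fin d → ℝ))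
    (hvv : ∀ i j, Omega (v i) (v j) = 0) (hB : IsUnit (Bmat v).det) :
    ((Bmat v)⁻¹ * Amat v)ᵀ = (Bmat v)⁻¹ * Amat v := by
  have hABt : Amat v * (Bmat v)ᵀ = Bmat v * (Amat v)ᵀ := by
    ext i j
    have h := hvv i j
    rw [Omega] at h
    have h' : dotR (v i).1 (v j).2 = dotR (v i).2 (v j).1 := by linarith
    simpa [Matrix.mul_apply, Amat, Bmat, Matrix.transpose_apply, dotR] using h'
  have hBt : IsUnit ((Bmat v)ᵀ).det := by rwa [Matrix.det_transpose]
  have h2 : Bmat v * ((Amat v)ᵀ * ((Bmat v)ᵀ)⁻¹) = Amat v := by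
    rw [← Matrix.mul_assoc, ← hABt, Matrix.mul_assoc, Matrix.mul_nonsing_inv _ hBt,
      Matrix.mul_one]
  calc ((Bmat v)⁻¹ * Amat v)ᵀ = (Amat v)ᵀ * ((Bmat v)ᵀ)⁻¹ := by
        rw [Matrix.transpose_mul, Matrix.transpose_nonsing_inv]
    _ = (Bmat v)⁻¹ * (Bmat v * ((Amat v)ᵀ * ((Bmat v)ᵀ)⁻¹)) := by
        rw [← Matrix.mul_assoc, Matrix.nonsing_inv_mul _ hB, Matrix.one_mul]
    _ = (Bmat v)⁻¹ * Amat v := by rw [h2]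

/-- Let `v_1,…,v_d` and `w_1,…,w_d` be bases of two transversal
Lagrangian planes in `(ℝ^{2d}, Ω)` with `det B_v ≠ 0` and `det B_w ≠ 0`. Then for every
Schwartz function `g`, every `j`, and all `ξ, η ∈ ℝ^d`,
`𝓕̃_v(Q_{v_j}(g))(ξ) = ξ_j 𝓕̃_v(g)(ξ)` and `𝓕̃_w(Q_{w_j}(g))(η) = η_j 𝓕̃_w(g)(η)`. -/
theorem Q_is_multiplication_in_modified_representation
    (d : ℕ) (v w : Fin d → (Fin d → ℝ) × (Fin d → ℝ))
    (hvind : LinearIndependent ℝ v) (hwind : LinearIndependent ℝ w)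
    (hvv : ∀ i j, Omega (v i) (v j) = 0)
    (hww : ∀ i j, Omega (w i) (w j) = 0)
    (htrans : Submodule.span ℝ (Set.range v) ⊓ Submodule.span ℝ (Set.range w) = ⊥)
    (hBv : (Bmat v).det ≠ 0) (hBw : (Bmat w).det ≠ 0)
    (σ : ℤ)
    (hσ : IsSignatureOf
      ((1 / 2 : ℝ) • ((Bmat v)⁻¹ * Amat v - (Bmat w)⁻¹ * Amat w)) σ) :
    ∀ (g : SchwartzMap (Fin d → ℝ) ℂ) (j : Fin d),
      (∀ ξ : Fin d → ℝ,
        FtildeV (Amat v) (Bmat v) (Bmat w) (Ymat v w) (Qop (v j) (⇑g)) ξ =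
          (ξ j : ℂ) * FtildeV (Amat v) (Bmat v) (Bmat w) (Ymat v w) (⇑g) ξ) ∧
      (∀ η : Fin d → ℝ,
        FtildeW (Amat w) (Bmat v) (Bmat w) (Ymat v w) σ (Qop (w j) (⇑g)) η =
          (η j : ℂ) * FtildeW (Amat w) (Bmat v) (Bmat w) (Ymat v w) σ (⇑g) η) := by
  intro g j
  have hBv' : IsUnit (Bmat v).det := isUnit_iff_ne_zero.2 hBv
  have hBw' : IsUnit (Bmat w).det := isUnit_iff_ne_zero.2 hBw
  have hvj : (fun k => Amat v j k, fun k => Bmat v j k) = v j := rfl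
  have hwj : (fun k => Amat w j k, fun k => Bmat w j k) = w j := rfl
  constructor
  · intro ξ
    have key := genFT_Qop (Amat v) (Bmat v) hBv' (lagrangian_symm v hvv hBv') g j ξ
    rw [hvj] at key
    simp only [FtildeV]
    rw [key]
    ring
  · intro η
    have key := genFT_Qop (Amat w) (Bmat w) hBw' (lagrangian_symm w hww hBw') g j η
    rw [hwj] at key
    simp only [FtildeW]
    rw [key]
    ring

end BLT16
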